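/- arXiv:1803.01930 — 3 statements merged into one kernel-verified Lean document; each statement's English description precedes it below -/
import Mathlib

section
/- For every sequence σ = (σ(1), …, σ(k)) and every start time t ∈ ℝ, the active duration equals the total service time plus the total travel time plus the total waiting time: A(σ, t) = Σ_{i=1}^k s_{σ(i)} + Σ_{i=2}^k d_{σ(i−1) σ(i)} + Σ_{i=1}^k max(a_{σ(i)} − τ_i, 0), where τ_i are the arrival times of the forward schedule of σ started at t. In particular, A(σ, t) ≥ 0 for all t. -/
variable {V : Type*}

/-- Service start time at a visit: `h = max(a v, min(τ, b v))`. -/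
noncomputable def svcStart (a b : V → ℝ) (v : V) (t : ℝ) : ℝ :=
  max (a v) (min t (b v))

/-- Completion time `C(σ, t)` of the forward schedule of `σ` started at `t`. -/
noncomputable def comp (a b s : V → ℝ) (d : V → V → ℝ) : List V → ℝ → ℝ
  | [], t => t
  | [v], t => svcStart a b v t + s v
  | v :: w :: rest, t => comp a b s d (w :: rest) (svcStart a b v t + s v + d v w)

/-- Total time warp `W(σ, t)` of the forward schedule of `σ` started at `t`. -/
noncomputable def warp (a b s : V → ℝ) (d : V → V → ℝ) : List V → ℝ → ℝ
  | [], _ => 0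
  | [v], t => max (t - b v) 0
  | v :: w :: rest, t =>
      max (t - b v) 0 + warp a b s d (w :: rest) (svcStart a b v t + s v + d v w)

/-- Active duration `A(σ, t) = C(σ, t) − t + W(σ, t)`. -/
noncomputable def activeDur (a b s : V → ℝ) (d : V → V → ℝ) (σ : List V) (t : ℝ) : ℝ :=
  comp a b s d σ t - t + warp a b s d σ t

/-- Arrival times `τ_1, …, τ_k` of the forward schedule of `σ` started at `t`. -/
noncomputable def arrivals (a b s : V → ℝ) (d : V → V → ℝ) : List V → ℝ → List ℝ
  | [], _ => []
  | [_], t => [t]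
  | v :: w :: rest, t => t :: arrivals a b s d (w :: rest) (svcStart a b v t + s v + d v w)

/-!
Along the schedule the clock moves from the arrival `τ` at a visit to its service start `h`, and
`h − τ + max(τ − b, 0) = max(a − τ, 0)` whenever `a ≤ b`: the time warp exactly cancels the
backward jumps. Hence the active duration telescopes into waiting, service and travel times,
each of which is nonnegative.
-/

section Telescoping

variable (a b s : V → ℝ) (d : V → V → ℝ)

lemma svcStart_sub_add_max_sub_eq_max_sub {v : V} (hab : a v ≤ b v) (t : ℝ) :
    svcStart a b v t - t + max (t - b v) 0 = max (a v - t) 0 := by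
  unfold svcStart
  simp only [max_def, min_def]
  split_ifs <;> linarith

lemma activeDur_nil (t : ℝ) : activeDur a b s d [] t = 0 := by
  simp [activeDur, comp, warp]

lemma activeDur_singleton {v : V} (hab : a v ≤ b v) (t : ℝ) :
    activeDur a b s d [v] t = max (a v - t) 0 + s v := by
  rw [← svcStart_sub_add_max_sub_eq_max_sub a b hab t, activeDur, comp, warp]
  ring

lemma activeDur_cons_cons {v w : V} (hab : a v ≤ b v) (rest : List V) (t : ℝ) :
    activeDur a b s d (v :: w :: rest) t =
      max (a v - t) 0 + s v + d v w +
        activeDur a b s d (w :: rest) (svcStart a b v t + s v + d v w) := by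
  rw [← svcStart_sub_add_max_sub_eq_max_sub a b hab t, activeDur, activeDur, comp, warp]
  ring

theorem activeDur_eq_sum (hab : ∀ v, a v ≤ b v) :
    ∀ (σ : List V) (t : ℝ), activeDur a b s d σ t =
        (σ.map s).sum
      + ((σ.zip σ.tail).map fun p => d p.1 p.2).sum
      + ((σ.zip (arrivals a b s d σ t)).map fun p => max (a p.1 - p.2) 0).sum
  | [], t => by simp [activeDur_nil, arrivals]
  | [v], t => by
      simp [activeDur_singleton a b s d (hab v), arrivals, add_comm]
  | v :: w :: rest, t => by
      rw [activeDur_cons_cons a b s d (hab v), activeDur_eq_sum hab (w :: rest)]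
      simp only [arrivals, List.map_cons, List.sum_cons, List.tail_cons, List.zip_cons_cons]
      ring

end Telescoping

theorem activeDur_eq_service_add_travel_add_wait_general
    (a b s : V → ℝ) (d : V → V → ℝ)
    (hs : ∀ v, 0 ≤ s v) (hab : ∀ v, a v ≤ b v) (hd : ∀ u v, 0 ≤ d u v)
    (σ : List V) (t : ℝ) :
    activeDur a b s d σ t =
        (σ.map s).sum
      + ((σ.zip σ.tail).map fun p => d p.1 p.2).sum
      + ((σ.zip (arrivals a b s d σ t)).map fun p => max (a p.1 - p.2) 0).sum ∧
    0 ≤ activeDur a b s d σ t := by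
  have h := activeDur_eq_sum a b s d hab σ t
  refine ⟨h, h ▸ add_nonneg (add_nonneg ?_ ?_) ?_⟩ <;>
    refine List.sum_nonneg (List.forall_mem_map.2 fun p _ => ?_)
  · exact hs p
  · exact hd p.1 p.2
  · exact le_max_right _ _

/-- For every nonempty sequence `σ` and start time `t`, the active duration
equals total service time plus total travel time plus total waiting time:
`A(σ,t) = Σᵢ s_{σ(i)} + Σ_{i≥2} d_{σ(i−1) σ(i)} + Σᵢ max(a_{σ(i)} − τᵢ, 0)`.
In particular `A(σ, t) ≥ 0`. -/
theorem activeDur_eq_service_add_travel_add_wait [Fintype V]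
    (a b s : V → ℝ) (d : V → V → ℝ)
    (hs : ∀ v, 0 ≤ s v) (hab : ∀ v, a v ≤ b v) (hd : ∀ u v, 0 ≤ d u v)
    (σ : List V) (hσ : σ ≠ []) (t : ℝ) :
    activeDur a b s d σ t =
        (σ.map s).sum
      + ((σ.zip σ.tail).map fun p => d p.1 p.2).sum
      + ((σ.zip (arrivals a b s d σ t)).map fun p => max (a p.1 - p.2) 0).sum ∧
    0 ≤ activeDur a b s d σ t :=
  activeDur_eq_service_add_travel_add_wait_general a b s d hs hab hd σ t
end

section
/- For any two sequences σ1 (with last visit u) and σ2 (with first visit v), the minimum time warp of the concatenation satisfies TW(σ1 ⊕ σ2) = TW(σ1) + TW(σ2) + Δ_TW, where δ = D(σ1) − TW(σ1) + d_{u v} and Δ_TW = max(E(σ1) + δ − L(σ2), 0). -/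
/-!
For every nonempty sequence `σ` the time warp and the active duration are piecewise linear with
a single breakpoint: `W(σ, t) = TW(σ) + max(t - L(σ), 0)` and `A(σ, t) = D(σ) + max(E(σ) - t, 0)`.
This is proved by induction, prepending one visit at a time, each step being an identity between
clamped affine functions.  The warp of `σ₁ ⊕ σ₂` started at `t` is
`W(σ₁, t) + W(σ₂, C(σ₁, t) + d_{uv})`, and since `C(σ₁, t) = t + A(σ₁, t) - W(σ₁, t)` this is an
explicit function of `t`, minimised at `t = min(E(σ₁), L(σ₁))`.
-/

variable {V : Type*}

/-- Minimum time warp `TW(σ) = min_t W(σ, t)`. -/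
noncomputable def TWv (a b s : V → ℝ) (d : V → V → ℝ) (σ : List V) : ℝ :=
  sInf (Set.range fun t => warp a b s d σ t)

/-- Latest start time achieving the minimum time warp: `L(σ) = max {t : W(σ,t) = TW(σ)}`. -/
noncomputable def Lv (a b s : V → ℝ) (d : V → V → ℝ) (σ : List V) : ℝ :=
  sSup {t | warp a b s d σ t = TWv a b s d σ}

/-- Minimum active duration `D(σ) = min_t A(σ, t)`. -/
noncomputable def Dv (a b s : V → ℝ) (d : V → V → ℝ) (σ : List V) : ℝ :=
  sInf (Set.range fun t => activeDur a b s d σ t)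

/-- Earliest start time achieving the minimum duration: `E(σ) = min {t : A(σ,t) = D(σ)}`. -/
noncomputable def Ev (a b s : V → ℝ) (d : V → V → ℝ) (σ : List V) : ℝ :=
  sInf {t | activeDur a b s d σ t = Dv a b s d σ}

theorem isLeast_range_add_max_sub_add_max (c E L K : ℝ) :
    IsLeast (Set.range fun t => c + (max (t - L) 0 + max (t + max (E - t) 0 - max (t - L) 0 + K) 0))
      (c + max (E + K) 0) := by
  refine ⟨⟨min E L, ?_⟩, ?_⟩
  · dsimp only
    rw [max_eq_right (sub_nonpos.2 (min_le_right E L)),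
      max_eq_left (sub_nonneg.2 (min_le_left E L))]
    ring_nf
  · rintro _ ⟨t, rfl⟩
    dsimp only
    have hE := le_max_left (E - t) 0
    have hL := le_max_right (t - L) 0
    have hX := le_max_left (t + max (E - t) 0 - max (t - L) 0 + K) 0
    have hX₀ := le_max_right (t + max (E - t) 0 - max (t - L) 0 + K) 0
    exact add_le_add_right (max_le (by linarith) (by linarith)) c

section Profile

variable {a b s : V → ℝ} {d : V → V → ℝ}

theorem svcStart_sub_add_max_sub {v : V} (hv : a v ≤ b v) (t : ℝ) :
    svcStart a b v t - t + max (t - b v) 0 = max (a v - t) 0 := by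
  simp only [svcStart, max_def, min_def]; split_ifs <;> linarith

theorem max_sub_add_max_svcStart_add_sub {v : V} (hv : a v ≤ b v) (c L t : ℝ) :
    max (t - b v) 0 + max (svcStart a b v t + c - L) 0 =
      max (svcStart a b v (L - c) + c - L) 0 + max (t - svcStart a b v (L - c)) 0 := by
  simp only [svcStart, max_def, min_def]; split_ifs <;> linarith

theorem max_sub_svcStart_add_add_max_sub {v : V} (hv : a v ≤ b v) (c E t : ℝ) :
    max (E - (svcStart a b v t + c)) 0 + max (a v - t) 0 =
      max (E - c - b v) 0 + max (svcStart a b v (E - c) - t) 0 := by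
  simp only [svcStart, max_def, min_def]; split_ifs <;> linarith

variable (a b s d) in
structure HasProfile (σ : List V) (W L D E : ℝ) : Prop where
  warp_eq : ∀ t, warp a b s d σ t = W + max (t - L) 0
  activeDur_eq : ∀ t, activeDur a b s d σ t = D + max (E - t) 0

namespace HasProfile

variable {σ : List V} {W L D E : ℝ}

theorem comp_eq (h : HasProfile a b s d σ W L D E) (t : ℝ) :
    comp a b s d σ t = t + D + max (E - t) 0 - W - max (t - L) 0 := by
  have hA := h.activeDur_eq t
  rw [activeDur, h.warp_eq] at hA
  linarith

theorem singleton {v : V} (hv : a v ≤ b v) : HasProfile a b s d [v] 0 (b v) (s v) (a v) where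
  warp_eq t := by simp [warp]
  activeDur_eq t := by
    rw [activeDur, comp, warp, ← svcStart_sub_add_max_sub hv t]
    ring

theorem cons {x y : V} {rest : List V} (hx : a x ≤ b x)
    (h : HasProfile a b s d (y :: rest) W L D E) :
    HasProfile a b s d (x :: y :: rest)
      (W + max (svcStart a b x (L - (s x + d x y)) + (s x + d x y) - L) 0)
      (svcStart a b x (L - (s x + d x y)))
      (D + (s x + d x y) + max (E - (s x + d x y) - b x) 0)
      (svcStart a b x (E - (s x + d x y))) where
  warp_eq t := by
    have key := max_sub_add_max_svcStart_add_sub hx (s x + d x y) L t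
    rw [warp, add_assoc (svcStart a b x t), h.warp_eq]
    linarith
  activeDur_eq t := by
    have key := max_sub_svcStart_add_add_max_sub hx (s x + d x y) E t
    have hstart := svcStart_sub_add_max_sub hx t
    have hA := h.activeDur_eq (svcStart a b x t + (s x + d x y))
    rw [activeDur] at hA ⊢
    rw [comp, warp, add_assoc (svcStart a b x t)]
    linarith

theorem exists_of_ne_nil (hab : ∀ v, a v ≤ b v) :
    ∀ σ : List V, σ ≠ [] → ∃ W L D E, HasProfile a b s d σ W L D E
  | [], hσ => absurd rfl hσ
  | [v], _ => ⟨_, _, _, _, singleton (hab v)⟩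
  | x :: y :: rest, _ => by
    obtain ⟨W, L, D, E, h⟩ := exists_of_ne_nil hab (y :: rest) (List.cons_ne_nil y rest)
    exact ⟨_, _, _, _, h.cons (hab x)⟩

theorem TWv_eq (h : HasProfile a b s d σ W L D E) : TWv a b s d σ = W := by
  refine IsLeast.csInf_eq ⟨⟨L, by simp [h.warp_eq]⟩, ?_⟩
  rintro _ ⟨t, rfl⟩
  simp [h.warp_eq]

theorem Lv_eq (h : HasProfile a b s d σ W L D E) : Lv a b s d σ = L := by
  have hlevel : {t | warp a b s d σ t = TWv a b s d σ} = Set.Iic L := by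
    ext t
    simp [h.warp_eq, h.TWv_eq]
  rw [Lv, hlevel, csSup_Iic]

theorem Dv_eq (h : HasProfile a b s d σ W L D E) : Dv a b s d σ = D := by
  refine IsLeast.csInf_eq ⟨⟨E, by simp [h.activeDur_eq]⟩, ?_⟩
  rintro _ ⟨t, rfl⟩
  simp [h.activeDur_eq]

theorem Ev_eq (h : HasProfile a b s d σ W L D E) : Ev a b s d σ = E := by
  have hlevel : {t | activeDur a b s d σ t = Dv a b s d σ} = Set.Ici E := by
    ext t
    simp [h.activeDur_eq, h.Dv_eq]
  rw [Ev, hlevel, csInf_Ici]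

end HasProfile

variable (a b s d) in
theorem warp_append_cons {u : V} (v : V) (tl : List V) :
    ∀ (σ : List V) (t : ℝ), σ.getLast? = some u →
      warp a b s d (σ ++ v :: tl) t =
        warp a b s d σ t + warp a b s d (v :: tl) (comp a b s d σ t + d u v)
  | [], _, hu => by simp at hu
  | [x], t, hu => by
    obtain rfl : x = u := by simpa using hu
    simp only [List.cons_append, List.nil_append, warp, comp]
  | x :: y :: rest, t, hu => by
    rw [List.getLast?_cons_cons] at hu
    have ih := warp_append_cons v tl (y :: rest) (svcStart a b x t + s x + d x y) hu
    simp only [List.cons_append] at ih ⊢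
    rw [warp, warp, comp, ih]
    ring

theorem HasProfile.TWv_append_cons {σ₁ tl : List V} {u v : V} {W₁ L₁ D₁ E₁ W₂ L₂ D₂ E₂ : ℝ}
    (h₁ : HasProfile a b s d σ₁ W₁ L₁ D₁ E₁) (h₂ : HasProfile a b s d (v :: tl) W₂ L₂ D₂ E₂)
    (hu : σ₁.getLast? = some u) :
    TWv a b s d (σ₁ ++ v :: tl) = W₁ + W₂ + max (E₁ + (D₁ - W₁ + d u v) - L₂) 0 := by
  have hwarp (t : ℝ) : warp a b s d (σ₁ ++ v :: tl) t = W₁ + W₂ + (max (t - L₁) 0 +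
      max (t + max (E₁ - t) 0 - max (t - L₁) 0 + (D₁ - W₁ + d u v - L₂)) 0) := by
    rw [warp_append_cons a b s d v tl σ₁ t hu, h₁.warp_eq, h₂.warp_eq, h₁.comp_eq]
    ring_nf
  simp only [TWv, hwarp]
  rw [(isLeast_range_add_max_sub_add_max _ E₁ L₁ _).csInf_eq]
  ring_nf

end Profile

theorem concat_TW_general
    (a b s : V → ℝ) (d : V → V → ℝ)
    (hab : ∀ v, a v ≤ b v)
    (σ₁ σ₂ : List V) (u v : V)
    (hu : σ₁.getLast? = some u) (hv : σ₂.head? = some v) :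
    TWv a b s d (σ₁ ++ σ₂) =
      TWv a b s d σ₁ + TWv a b s d σ₂ +
        max (Ev a b s d σ₁ + (Dv a b s d σ₁ - TWv a b s d σ₁ + d u v) - Lv a b s d σ₂) 0 := by
  obtain ⟨tl, rfl⟩ := List.head?_eq_some_iff.mp hv
  have hσ₁ : σ₁ ≠ [] := by rintro rfl; simp at hu
  obtain ⟨W₁, L₁, D₁, E₁, h₁⟩ := HasProfile.exists_of_ne_nil (s := s) (d := d) hab σ₁ hσ₁
  obtain ⟨W₂, L₂, D₂, E₂, h₂⟩ :=
    HasProfile.exists_of_ne_nil (s := s) (d := d) hab (v :: tl) (List.cons_ne_nil v tl)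
  rw [h₁.TWv_append_cons h₂ hu, h₁.TWv_eq, h₂.TWv_eq, h₂.Lv_eq, h₁.Dv_eq, h₁.Ev_eq]

/-- For sequences `σ₁` (with last visit `u`) and `σ₂` (with first visit `v`),
`TW(σ₁ ⊕ σ₂) = TW(σ₁) + TW(σ₂) + Δ_TW` where `δ = D(σ₁) − TW(σ₁) + d u v` and
`Δ_TW = max(E(σ₁) + δ − L(σ₂), 0)`. -/
theorem concat_TW [Fintype V]
    (a b s : V → ℝ) (d : V → V → ℝ)
    (hs : ∀ v, 0 ≤ s v) (hab : ∀ v, a v ≤ b v) (hd : ∀ u v, 0 ≤ d u v)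
    (σ₁ σ₂ : List V) (u v : V)
    (hu : σ₁.getLast? = some u) (hv : σ₂.head? = some v) :
    TWv a b s d (σ₁ ++ σ₂) =
      TWv a b s d σ₁ + TWv a b s d σ₂ +
        max (Ev a b s d σ₁ + (Dv a b s d σ₁ - TWv a b s d σ₁ + d u v) - Lv a b s d σ₂) 0 :=
  concat_TW_general a b s d hab σ₁ σ₂ u v hu hv
end

section
/- For any two sequences σ1 (with last visit u) and σ2 (with first visit v), the minimum active duration of the concatenation satisfies D(σ1 ⊕ σ2) = D(σ1) + d_{u v} + D(σ2) + Δ_WT, where δ = D(σ1) − TW(σ1) + d_{u v} and Δ_WT = max(E(σ2) − δ − L(σ1), 0). -/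
/-!
Every nonempty sequence has a piecewise linear profile: for some `E ≤ L`,
`A(σ, t) = D(σ) + max(E − t, 0)` and `W(σ, t) = TW(σ) + max(t − L, 0)`, so that `E = E(σ)` and
`L = L(σ)`. For such a `σ₁`, the arrival at the first visit of `σ₂` when `σ₁` starts at `t` is
`C(σ₁, t) + d u v = δ + clamp(t)`, where `clamp` projects onto `[E(σ₁), L(σ₁)]`. Substituting this
into the profile of `σ₂` shows that profiles are preserved under concatenation, with the duration
of `σ₁ ⊕ σ₂` as claimed; a singleton `[v]` has the profile `(s v, a v, 0, b v)`.
-/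


variable {V : Type*}

lemma add_max_sub_sub_max_sub_eq_max_min {E L : ℝ} (h : E ≤ L) (t : ℝ) :
    t + max (E - t) 0 - max (t - L) 0 = max E (min t L) := by
  simp only [max_def, min_def]; split_ifs <;> linarith

lemma max_sub_add_max_sub_max_min_comm {E L : ℝ} (h : E ≤ L) (t x : ℝ) :
    max (E - t) 0 + max (x - max E (min t L)) 0
      = max (x - L) 0 + max (max E (min x L) - t) 0 := by
  simp only [max_def, min_def]; split_ifs <;> linarith

lemma max_sub_add_max_max_min_sub_comm {E L : ℝ} (h : E ≤ L) (t y : ℝ) :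
    max (t - L) 0 + max (max E (min t L) - y) 0
      = max (E - y) 0 + max (t - max E (min y L)) 0 := by
  simp only [max_def, min_def]; split_ifs <;> linarith

section Schedule

variable (a b s : V → ℝ) (d : V → V → ℝ)

lemma comp_append {u w : V} :
    ∀ {σ₁ σ₂ : List V}, σ₁.getLast? = some u → σ₂.head? = some w → ∀ t,
      comp a b s d (σ₁ ++ σ₂) t = comp a b s d σ₂ (comp a b s d σ₁ t + d u w)
  | [x], w' :: σ₂, hu, hw, t => by
      simp only [List.getLast?_singleton, List.head?_cons, Option.some.injEq] at hu hw
      subst hu hw; rfl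
  | x :: y :: σ₁, σ₂, hu, hw, t => by
      rw [List.getLast?_cons_cons] at hu
      exact comp_append (σ₁ := y :: σ₁) hu hw _

lemma warp_append {u w : V} :
    ∀ {σ₁ σ₂ : List V}, σ₁.getLast? = some u → σ₂.head? = some w → ∀ t,
      warp a b s d (σ₁ ++ σ₂) t
        = warp a b s d σ₁ t + warp a b s d σ₂ (comp a b s d σ₁ t + d u w)
  | [x], w' :: σ₂, hu, hw, t => by
      simp only [List.getLast?_singleton, List.head?_cons, Option.some.injEq] at hu hw
      subst hu hw; rfl
  | x :: y :: σ₁, σ₂, hu, hw, t => by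
      rw [List.getLast?_cons_cons] at hu
      have := warp_append (σ₁ := y :: σ₁) hu hw (svcStart a b x t + s x + d x y)
      rw [List.cons_append, List.cons_append, warp, ← List.cons_append, this, comp, warp]
      ring

lemma activeDur_append {σ₁ σ₂ : List V} {u w : V}
    (hu : σ₁.getLast? = some u) (hw : σ₂.head? = some w) (t : ℝ) :
    activeDur a b s d (σ₁ ++ σ₂) t
      = activeDur a b s d σ₁ t + d u w
        + activeDur a b s d σ₂ (comp a b s d σ₁ t + d u w) := by
  simp only [activeDur, comp_append a b s d hu hw, warp_append a b s d hu hw]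
  ring

structure HasProfile_s6 (σ : List V) (D E TW L : ℝ) : Prop where
  le : E ≤ L
  activeDur_eq : ∀ t, activeDur a b s d σ t = D + max (E - t) 0
  warp_eq : ∀ t, warp a b s d σ t = TW + max (t - L) 0

variable {a b s d}

lemma HasProfile_s6.singleton (hab : ∀ v, a v ≤ b v) (v : V) :
    HasProfile_s6 a b s d [v] (s v) (a v) 0 (b v) where
  le := hab v
  activeDur_eq t := by
    have := hab v
    simp only [activeDur, comp, warp, svcStart, max_def, min_def]
    split_ifs <;> linarith
  warp_eq t := (zero_add _).symm

lemma HasProfile_s6.comp_add_eq {σ : List V} {D E TW L : ℝ}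
    (h : HasProfile_s6 a b s d σ D E TW L) (c t : ℝ) :
    comp a b s d σ t + c = (D - TW + c) + max E (min t L) := by
  have hA := h.activeDur_eq t
  have hW := h.warp_eq t
  rw [activeDur] at hA
  rw [← add_max_sub_sub_max_sub_eq_max_min h.le t]
  linarith

lemma HasProfile_s6.append {σ₁ σ₂ : List V} {u w : V}
    (hu : σ₁.getLast? = some u) (hw : σ₂.head? = some w)
    {D₁ E₁ TW₁ L₁ D₂ E₂ TW₂ L₂ : ℝ}
    (h₁ : HasProfile_s6 a b s d σ₁ D₁ E₁ TW₁ L₁) (h₂ : HasProfile_s6 a b s d σ₂ D₂ E₂ TW₂ L₂) :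
    HasProfile_s6 a b s d (σ₁ ++ σ₂)
      (D₁ + d u w + D₂ + max (E₂ - (D₁ - TW₁ + d u w) - L₁) 0)
      (max E₁ (min (E₂ - (D₁ - TW₁ + d u w)) L₁))
      (TW₁ + TW₂ + max (E₁ - (L₂ - (D₁ - TW₁ + d u w))) 0)
      (max E₁ (min (L₂ - (D₁ - TW₁ + d u w)) L₁)) where
  le := max_le_max le_rfl (min_le_min (by linarith [h₂.le]) le_rfl)
  activeDur_eq t := by
    rw [activeDur_append a b s d hu hw, h₁.activeDur_eq, h₂.activeDur_eq, h₁.comp_add_eq,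
      sub_add_eq_sub_sub]
    linarith [max_sub_add_max_sub_max_min_comm h₁.le t (E₂ - (D₁ - TW₁ + d u w))]
  warp_eq t := by
    have hshift : D₁ - TW₁ + d u w + max E₁ (min t L₁) - L₂
        = max E₁ (min t L₁) - (L₂ - (D₁ - TW₁ + d u w)) := by ring
    rw [warp_append a b s d hu hw, h₁.warp_eq, h₂.warp_eq, h₁.comp_add_eq, hshift]
    linarith [max_sub_add_max_max_min_sub_comm h₁.le t (L₂ - (D₁ - TW₁ + d u w))]

lemma exists_hasProfile (hab : ∀ v, a v ≤ b v) :
    ∀ {σ : List V}, σ ≠ [] → ∃ D E TW L, HasProfile_s6 a b s d σ D E TW L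
  | [v], _ => ⟨_, _, _, _, .singleton hab v⟩
  | v :: w :: σ, _ => by
      obtain ⟨D, E, TW, L, h⟩ := exists_hasProfile hab (σ := w :: σ) (List.cons_ne_nil _ _)
      exact ⟨_, _, _, _, (HasProfile_s6.singleton hab v).append rfl rfl h⟩

variable {σ : List V} {D E TW L : ℝ}

lemma HasProfile_s6.Dv_eq (h : HasProfile_s6 a b s d σ D E TW L) : Dv a b s d σ = D := by
  refine IsLeast.csInf_eq ⟨⟨E, by simp [h.activeDur_eq]⟩, ?_⟩
  rintro _ ⟨t, rfl⟩
  simp [h.activeDur_eq]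

lemma HasProfile_s6.TWv_eq (h : HasProfile_s6 a b s d σ D E TW L) : TWv a b s d σ = TW := by
  refine IsLeast.csInf_eq ⟨⟨L, by simp [h.warp_eq]⟩, ?_⟩
  rintro _ ⟨t, rfl⟩
  simp [h.warp_eq]

lemma HasProfile_s6.Ev_eq (h : HasProfile_s6 a b s d σ D E TW L) : Ev a b s d σ = E := by
  have : {t | activeDur a b s d σ t = Dv a b s d σ} = Set.Ici E := by
    ext t
    simp [h.Dv_eq, h.activeDur_eq]
  rw [Ev, this, csInf_Ici]

lemma HasProfile_s6.Lv_eq (h : HasProfile_s6 a b s d σ D E TW L) : Lv a b s d σ = L := by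
  have : {t | warp a b s d σ t = TWv a b s d σ} = Set.Iic L := by
    ext t
    simp [h.TWv_eq, h.warp_eq]
  rw [Lv, this, csSup_Iic]

end Schedule

theorem concat_D_general
    (a b s : V → ℝ) (d : V → V → ℝ)
    (hab : ∀ v, a v ≤ b v)
    (σ₁ σ₂ : List V) (u v : V)
    (hu : σ₁.getLast? = some u) (hv : σ₂.head? = some v) :
    Dv a b s d (σ₁ ++ σ₂) =
      Dv a b s d σ₁ + d u v + Dv a b s d σ₂ +
        max (Ev a b s d σ₂ - (Dv a b s d σ₁ - TWv a b s d σ₁ + d u v) - Lv a b s d σ₁) 0 := by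
  obtain ⟨D₁, E₁, TW₁, L₁, h₁⟩ :=
    exists_hasProfile hab (List.ne_nil_of_mem (List.mem_of_getLast? hu))
  obtain ⟨D₂, E₂, TW₂, L₂, h₂⟩ :=
    exists_hasProfile hab (List.ne_nil_of_mem (List.mem_of_head? hv))
  rw [(h₁.append hu hv h₂).Dv_eq, h₁.Dv_eq, h₂.Dv_eq, h₁.TWv_eq, h₁.Lv_eq, h₂.Ev_eq]

/-- For sequences `σ₁` (with last visit `u`) and `σ₂` (with first visit `v`),
`D(σ₁ ⊕ σ₂) = D(σ₁) + d u v + D(σ₂) + Δ_WT` where `δ = D(σ₁) − TW(σ₁) + d u v` and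
`Δ_WT = max(E(σ₂) − δ − L(σ₁), 0)`. -/
theorem concat_D [Fintype V]
    (a b s : V → ℝ) (d : V → V → ℝ)
    (hs : ∀ v, 0 ≤ s v) (hab : ∀ v, a v ≤ b v) (hd : ∀ u v, 0 ≤ d u v)
    (σ₁ σ₂ : List V) (u v : V)
    (hu : σ₁.getLast? = some u) (hv : σ₂.head? = some v) :
    Dv a b s d (σ₁ ++ σ₂) =
      Dv a b s d σ₁ + d u v + Dv a b s d σ₂ +
        max (Ev a b s d σ₂ - (Dv a b s d σ₁ - TWv a b s d σ₁ + d u v) - Lv a b s d σ₁) 0 :=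
  concat_D_general a b s d hab σ₁ σ₂ u v hu hv
end
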